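/- arXiv:1405.3458 — 6 statements merged into one kernel-verified Lean document; each statement's English description precedes it below -/
import Mathlib

section
/- If a sequence a : ℕ → ℝ satisfies a(k+p) = a(k) + p·ρ for all k ≥ K_p and a(k+q) = a(k) + q·ρ for all k ≥ K_q (with p, q positive integers and ρ real), then a(k + gcd(p,q)) = a(k) + gcd(p,q)·ρ for all k ≥ max(K_p, K_q). -/
theorem transient_indep_of_period (a : ℕ → ℝ) (p q : ℕ) (hp : 0 < p) (hq : 0 < q)
    (Kp Kq : ℕ) (ρ : ℝ)
    (h1 : ∀ k, Kp ≤ k → a (k + p) = a k + (p : ℝ) * ρ)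
    (h2 : ∀ k, Kq ≤ k → a (k + q) = a k + (q : ℝ) * ρ) :
    ∀ k, max Kp Kq ≤ k → a (k + Nat.gcd p q) = a k + (Nat.gcd p q : ℝ) * ρ := by
  -- iterated versions
  have H1 : ∀ n k, Kp ≤ k → a (k + n * p) = a k + ((n * p : ℕ) : ℝ) * ρ := by
    intro n
    induction n with
    | zero => intro k hk; simp
    | succ n ih =>
      intro k hk
      have h := h1 (k + n * p) (le_trans hk (Nat.le_add_right _ _))
      have : k + (n + 1) * p = k + n * p + p := by ring
      rw [this, h, ih k hk]
      push_cast
      ring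
  have H2 : ∀ n k, Kq ≤ k → a (k + n * q) = a k + ((n * q : ℕ) : ℝ) * ρ := by
    intro n
    induction n with
    | zero => intro k hk; simp
    | succ n ih =>
      intro k hk
      have h := h2 (k + n * q) (le_trans hk (Nat.le_add_right _ _))
      have : k + (n + 1) * q = k + n * q + q := by ring
      rw [this, h, ih k hk]
      push_cast
      ring
  -- Bezout: find naturals u v with u * p = gcd + v * q
  obtain ⟨u, v, huv⟩ : ∃ u v : ℕ, u * p = Nat.gcd p q + v * q := by
    have hbez : (Nat.gcd p q : ℤ) = p * Nat.gcdA p q + q * Nat.gcdB p q :=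
      Nat.gcd_eq_gcd_ab p q
    set A := Nat.gcdA p q
    set B := Nat.gcdB p q
    set t : ℤ := ((A.natAbs + B.natAbs + 1 : ℕ) : ℤ)
    have hq1 : (1 : ℤ) ≤ q := by exact_mod_cast hq
    have hp1 : (1 : ℤ) ≤ p := by exact_mod_cast hp
    have hA : 0 ≤ A + t * q := by
      have h1 : -A ≤ (A.natAbs : ℤ) := by
        rw [← Int.abs_eq_natAbs]; exact neg_le_abs A
      have h2 : (A.natAbs : ℤ) + 1 ≤ t := by
        simp only [t]; omega
      nlinarith
    have hB : 0 ≤ t * p - B := by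
      have h1 : B ≤ (B.natAbs : ℤ) := by
        rw [← Int.abs_eq_natAbs]; exact le_abs_self B
      have h2 : (B.natAbs : ℤ) + 1 ≤ t := by
        simp only [t]; omega
      nlinarith
    refine ⟨(A + t * q).toNat, (t * p - B).toNat, ?_⟩
    have : ((A + t * q).toNat : ℤ) * p = Nat.gcd p q + ((t * p - B).toNat : ℤ) * q := by
      rw [Int.toNat_of_nonneg hA, Int.toNat_of_nonneg hB, hbez]; ring
    exact_mod_cast this
  intro k hk
  have hkp : Kp ≤ k := le_trans (le_max_left _ _) hk
  have hkq : Kq ≤ k := le_trans (le_max_right _ _) hk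
  have e1 : a (k + u * p) = a k + ((u * p : ℕ) : ℝ) * ρ := H1 u k hkp
  have e2 : a (k + Nat.gcd p q + v * q) = a (k + Nat.gcd p q) + ((v * q : ℕ) : ℝ) * ρ :=
    H2 v (k + Nat.gcd p q) (le_trans hkq (Nat.le_add_right _ _))
  have hidx : k + u * p = k + Nat.gcd p q + v * q := by omega
  rw [hidx, e2] at e1
  have hcast : ((u * p : ℕ) : ℝ) = (Nat.gcd p q : ℝ) + ((v * q : ℕ) : ℝ) := by
    exact_mod_cast congrArg (Nat.cast : ℕ → ℝ) huv
  rw [hcast] at e1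
  linarith
end

section
/- Let a, b : ℕ → ℝ∪{-∞} be eventually periodic with period p and ratios ρ_a > ρ_b (where a(k+p) = a(k) + p·ρ_a means both sides are -∞ or both finite with the stated relation). If for all sufficiently large k, a(k) = -∞ implies b(k) = -∞, then max(a(k), b(k)) is eventually periodic with period p and ratio ρ_a. -/
theorem max_eventually_periodic_dominant_ratio_ereal (a b : ℕ → EReal) (p : ℕ)
    (hp : 0 < p) (ρa ρb : ℝ) (hρ : ρa > ρb)
    (ha : ∃ K : ℕ, ∀ k, K ≤ k → a (k + p) = a k + (((p : ℝ) * ρa : ℝ) : EReal))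
    (hb : ∃ K : ℕ, ∀ k, K ≤ k → b (k + p) = b k + (((p : ℝ) * ρb : ℝ) : EReal))
    (hbot : ∃ K : ℕ, ∀ k, K ≤ k → (a k = ⊥ → b k = ⊥)) :
    ∃ K : ℕ, ∀ k, K ≤ k →
      max (a (k + p)) (b (k + p)) = max (a k) (b k) + (((p : ℝ) * ρa : ℝ) : EReal) := by
  obtain ⟨Ka, hKa⟩ := ha
  obtain ⟨Kb, hKb⟩ := hb
  obtain ⟨Kc, hKc⟩ := hbot
  set K₀ := max (max Ka Kb) Kc with hK₀
  have hKa' : ∀ k, K₀ ≤ k → a (k + p) = a k + (((p : ℝ) * ρa : ℝ) : EReal) :=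
    fun k hk => hKa k (le_trans (le_trans (le_max_left _ _) (le_max_left _ _)) hk)
  have hKb' : ∀ k, K₀ ≤ k → b (k + p) = b k + (((p : ℝ) * ρb : ℝ) : EReal) :=
    fun k hk => hKb k (le_trans (le_trans (le_max_right _ _) (le_max_left _ _)) hk)
  have hKc' : ∀ k, K₀ ≤ k → (a k = ⊥ → b k = ⊥) :=
    fun k hk => hKc k (le_trans (le_max_right _ _) hk)
  have hcle : (((p : ℝ) * ρb : ℝ) : EReal) ≤ (((p : ℝ) * ρa : ℝ) : EReal) := by
    exact_mod_cast mul_le_mul_of_nonneg_left hρ.le (by positivity)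
  -- propagation of the property P k := b k ≤ a k ∨ b k = ⊤
  have prop : ∀ k, K₀ ≤ k → (b k ≤ a k ∨ b k = ⊤) → (b (k+p) ≤ a (k+p) ∨ b (k+p) = ⊤) := by
    intro k hk h
    rcases h with h | h
    · left
      rw [hKa' k hk, hKb' k hk]
      exact add_le_add h hcle
    · right
      rw [hKb' k hk, h]
      exact EReal.top_add_coe _
  have iter : ∀ k, K₀ ≤ k → (b k ≤ a k ∨ b k = ⊤) → ∀ n,
      (b (k + n*p) ≤ a (k + n*p) ∨ b (k + n*p) = ⊤) := by
    intro k hk h n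
    induction n with
    | zero => simpa using h
    | succ n ih =>
      have e : k + (n+1)*p = (k + n*p) + p := by ring
      rw [e]
      exact prop _ (le_trans hk (Nat.le_add_right _ _)) ih
  have itera : ∀ k, K₀ ≤ k → ∀ n,
      a (k + n*p) = a k + (((n:ℝ) * ((p:ℝ)*ρa) : ℝ) : EReal) := by
    intro k hk n
    induction n with
    | zero => simp
    | succ n ih =>
      have e : k + (n+1)*p = (k + n*p) + p := by ring
      rw [e, hKa' _ (le_trans hk (Nat.le_add_right _ _)), ih, add_assoc]
      congr 1
      rw [← EReal.coe_add]
      norm_cast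
      push_cast
      ring
  have iterb : ∀ k, K₀ ≤ k → ∀ n,
      b (k + n*p) = b k + (((n:ℝ) * ((p:ℝ)*ρb) : ℝ) : EReal) := by
    intro k hk n
    induction n with
    | zero => simp
    | succ n ih =>
      have e : k + (n+1)*p = (k + n*p) + p := by ring
      rw [e, hKb' _ (le_trans hk (Nat.le_add_right _ _)), ih, add_assoc]
      congr 1
      rw [← EReal.coe_add]
      norm_cast
      push_cast
      ring
  -- reaching the property along each class
  have reach : ∀ j, ∃ N, K₀ ≤ j → (b (j + N*p) ≤ a (j + N*p) ∨ b (j + N*p) = ⊤) := by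
    intro j
    by_cases hbt : b j = ⊤
    · exact ⟨0, fun _ => by simpa using Or.inr hbt⟩
    by_cases hbb : b j = ⊥
    · exact ⟨0, fun _ => by simpa using Or.inl (hbb ▸ bot_le)⟩
    by_cases hat : a j = ⊤
    · exact ⟨0, fun _ => by simpa using Or.inl (hat ▸ le_top)⟩
    by_cases hab : a j = ⊥
    · refine ⟨0, fun hj => ?_⟩
      simp only [Nat.zero_mul, Nat.add_zero]
      exact Or.inl ((hKc' j hj hab) ▸ bot_le)
    -- both real
    set x := (a j).toReal with hx
    set y := (b j).toReal with hy
    have hax : a j = (x : EReal) := (EReal.coe_toReal hat hab).symm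
    have hby : b j = (y : EReal) := (EReal.coe_toReal hbt hbb).symm
    have hδ : (0:ℝ) < (p:ℝ) * (ρa - ρb) := by
      have : (0:ℝ) < (p:ℝ) := by exact_mod_cast hp
      nlinarith
    refine ⟨⌈(y - x) / ((p:ℝ) * (ρa - ρb))⌉₊, fun hj => ?_⟩
    left
    set N := ⌈(y - x) / ((p:ℝ) * (ρa - ρb))⌉₊ with hN
    have hle : (y - x) / ((p:ℝ) * (ρa - ρb)) ≤ (N:ℝ) := Nat.le_ceil _
    have hyx : y - x ≤ (N:ℝ) * ((p:ℝ) * (ρa - ρb)) := by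
      rw [div_le_iff₀ hδ] at hle
      linarith
    have hreal : y + (N:ℝ) * ((p:ℝ) * ρb) ≤ x + (N:ℝ) * ((p:ℝ) * ρa) := by nlinarith
    rw [itera j hj N, iterb j hj N, hax, hby, ← EReal.coe_add, ← EReal.coe_add]
    exact_mod_cast hreal
  choose g hg using reach
  set M := Finset.sup (Finset.range p) (fun i => g (K₀ + i)) with hM
  refine ⟨K₀ + p * (M + 1), fun k hk => ?_⟩
  have hk0 : K₀ ≤ k := le_trans (Nat.le_add_right _ _) hk
  set i := (k - K₀) % p with hi
  set q := (k - K₀) / p with hq'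
  have hdm := Nat.div_add_mod (k - K₀) p
  have hip : i < p := Nat.mod_lt _ hp
  have hkeq : k = K₀ + i + p * q := by
    have h1 : p * q + i = k - K₀ := hdm
    omega
  have hgM : g (K₀ + i) ≤ M := Finset.le_sup (f := fun i => g (K₀ + i)) (Finset.mem_range.mpr hip)
  have hq : g (K₀ + i) ≤ q := by
    have h2 : p * (M + 1) ≤ p * q + i := by omega
    have h3 : p * (M + 1) < p * (q + 1) := by
      calc p * (M + 1) ≤ p * q + i := h2
        _ < p * q + p := by omega
        _ = p * (q + 1) := by ring
    have h4 : M + 1 < q + 1 := Nat.lt_of_mul_lt_mul_left h3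
    omega
  set g' := g (K₀ + i) with hg'
  obtain ⟨d, hd⟩ : ∃ d, q = g' + d := ⟨q - g', by omega⟩
  have hk' : k = (K₀ + i + g' * p) + d * p := by rw [hkeq, hd]; ring
  have Pk : b k ≤ a k ∨ b k = ⊤ := by
    rw [hk']
    exact iter _ (by omega) (hg (K₀ + i) (by omega)) d
  rcases Pk with h | h
  · have hba : b (k+p) ≤ a (k+p) := by
      rw [hKa' k hk0, hKb' k hk0]
      exact add_le_add h hcle
    rw [max_eq_left hba, max_eq_left h, hKa' k hk0]
  · have hbtop : b (k+p) = ⊤ := by rw [hKb' k hk0, h]; exact EReal.top_add_coe _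
    rw [max_eq_right (by rw [hbtop]; exact le_top), hbtop,
      max_eq_right (by rw [h]; exact le_top), h, EReal.top_add_coe]
end

section
/- Let a, b : ℕ → ℝ be sequences with a(k+p) = a(k) + p·ρ for all k ≥ K_a and b(k+q) = b(k) + q·ρ for all k ≥ K_b (same ratio ρ). Then the max-plus convolution c(k) = max over k₁ + k₂ = k of (a(k₁) + b(k₂)) satisfies c(k + lcm(p,q)) = c(k) + lcm(p,q)·ρ for all k ≥ K_a + K_b + lcm(p,q). -/
noncomputable def maxPlusConv (a b : ℕ → ℝ) (k : ℕ) : ℝ :=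
  (Finset.range (k + 1)).sup' (Finset.nonempty_range_iff.mpr (Nat.succ_ne_zero k))
    (fun i => a i + b (k - i))

lemma shift_iter (a : ℕ → ℝ) (p : ℕ) (ρ : ℝ) (Ka : ℕ)
    (ha : ∀ k, Ka ≤ k → a (k + p) = a k + (p : ℝ) * ρ) :
    ∀ m k, Ka ≤ k → a (k + m * p) = a k + ((m * p : ℕ) : ℝ) * ρ := by
  intro m
  induction m with
  | zero => simp
  | succ n ih =>
    intro k hk
    have h1 : k + (n + 1) * p = (k + n * p) + p := by ring
    rw [h1, ha _ (le_trans hk (by omega)), ih k hk]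
    push_cast; ring

lemma le_maxPlusConv (a b : ℕ → ℝ) (k i : ℕ) (hi : i ≤ k) :
    a i + b (k - i) ≤ maxPlusConv a b k :=
  Finset.le_sup' (fun i => a i + b (k - i)) (Finset.mem_range.mpr (by omega))

theorem maxPlusConv_eventually_periodic (a b : ℕ → ℝ) (p q : ℕ) (hp : 0 < p)
    (hq : 0 < q) (ρ : ℝ) (Ka Kb : ℕ)
    (ha : ∀ k, Ka ≤ k → a (k + p) = a k + (p : ℝ) * ρ)
    (hb : ∀ k, Kb ≤ k → b (k + q) = b k + (q : ℝ) * ρ) :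
    ∀ k, Ka + Kb + Nat.lcm p q ≤ k →
      maxPlusConv a b (k + Nat.lcm p q) = maxPlusConv a b k + (Nat.lcm p q : ℝ) * ρ := by
  intro k hk
  set L := Nat.lcm p q with hL
  obtain ⟨m, hm⟩ := Nat.dvd_lcm_left p q
  obtain ⟨n, hn⟩ := Nat.dvd_lcm_right p q
  have hm' : m * p = L := by rw [hL, hm, Nat.mul_comm]
  have hn' : n * q = L := by rw [hL, hn, Nat.mul_comm]
  have ha' : ∀ j, Ka ≤ j → a (j + L) = a j + (L : ℝ) * ρ := by
    intro j hj
    have h := shift_iter a p ρ Ka ha m j hj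
    rw [hm'] at h
    exact h
  have hb' : ∀ j, Kb ≤ j → b (j + L) = b j + (L : ℝ) * ρ := by
    intro j hj
    have h := shift_iter b q ρ Kb hb n j hj
    rw [hn'] at h
    exact h
  apply le_antisymm
  · apply Finset.sup'_le
    intro i hi
    simp only [Finset.mem_range] at hi
    have hi' : i ≤ k + L := by omega
    by_cases hc : Ka + L ≤ i
    · have h1 : a i = a (i - L) + (L : ℝ) * ρ := by
        have h := ha' (i - L) (by omega)
        rwa [Nat.sub_add_cancel (by omega)] at h
      have h2 : a (i - L) + b (k - (i - L)) ≤ maxPlusConv a b k :=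
        le_maxPlusConv a b k (i - L) (by omega)
      have h3 : k + L - i = k - (i - L) := by omega
      rw [h3, h1]
      linarith
    · have hj : Kb + L ≤ k + L - i := by omega
      have h1 : b (k + L - i) = b (k - i) + (L : ℝ) * ρ := by
        rw [show k + L - i = (k - i) + L by omega]
        exact hb' (k - i) (by omega)
      have h2 : a i + b (k - i) ≤ maxPlusConv a b k :=
        le_maxPlusConv a b k i (by omega)
      rw [h1]
      linarith
  · have key : maxPlusConv a b k ≤ maxPlusConv a b (k + L) - (L : ℝ) * ρ := by
      apply Finset.sup'_le
      intro i hi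
      simp only [Finset.mem_range] at hi
      have hi' : i ≤ k := by omega
      by_cases hc : Ka ≤ i
      · have h1 : a (i + L) = a i + (L : ℝ) * ρ := ha' i hc
        have h2 : a (i + L) + b (k + L - (i + L)) ≤ maxPlusConv a b (k + L) :=
          le_maxPlusConv a b (k + L) (i + L) (by omega)
        have h3 : k + L - (i + L) = k - i := by omega
        rw [h3, h1] at h2
        linarith
      · have h1 : b (k - i + L) = b (k - i) + (L : ℝ) * ρ := hb' (k - i) (by omega)
        have h2 : a i + b (k + L - i) ≤ maxPlusConv a b (k + L) :=
          le_maxPlusConv a b (k + L) i (by omega)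
        have h3 : k + L - i = k - i + L := by omega
        rw [h3, h1] at h2
        linarith
    linarith
end

section
/- Let A be an n×n max-plus matrix with a self-loop at node h of weight 0 (A_{h,h} = 0) such that every cycle of G(A) has weight at most 0. Then for every node i, the sequence k ↦ (A^⊗k)_{i,h} is nondecreasing in k and constant for k ≥ n-1, i.e., (A^⊗k)_{i,h} = (A^⊗(n-1))_{i,h} for all k ≥ n-1. -/
/-- Max-plus matrix product: `(A ⊗ B) i j = max_h (A i h + B h j)` over `ℝ ∪ {-∞}`. -/
noncomputable def mpMul {n : ℕ} (A B : Fin n → Fin n → EReal) : Fin n → Fin n → EReal :=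
  fun i j => ⨆ h : Fin n, A i h + B h j

/-- Max-plus matrix power. -/
noncomputable def mpPow {n : ℕ} (A : Fin n → Fin n → EReal) : ℕ → Fin n → Fin n → EReal
  | 0 => fun i j => if i = j then 0 else ⊥
  | k + 1 => mpMul A (mpPow A k)

/-- `f` lists the successive nodes of a walk of length `k` in `G(A)`:
all consecutive pairs are edges, i.e., have finite weight. -/
def IsWalk {n : ℕ} (A : Fin n → Fin n → EReal) {k : ℕ} (f : Fin (k + 1) → Fin n) : Prop :=
  ∀ t : Fin k, A (f t.castSucc) (f t.succ) ≠ ⊥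

/-- The weight of a walk: sum of the weights of its edges. -/
noncomputable def walkWeight {n : ℕ} (A : Fin n → Fin n → EReal) {k : ℕ}
    (f : Fin (k + 1) → Fin n) : EReal :=
  ∑ t : Fin k, A (f t.castSucc) (f t.succ)

/-- A cycle: a nonempty closed walk in which only the start and end node coincide. -/
def IsCycle {n : ℕ} (A : Fin n → Fin n → EReal) {k : ℕ} (f : Fin (k + 1) → Fin n) : Prop :=
  0 < k ∧ IsWalk A f ∧ f 0 = f (Fin.last k) ∧
    Function.Injective (fun t : Fin k => f t.castSucc)

/-!
`(A^⊗k) i j` is the largest weight of a walk of length `k` from `i` to `j`. In column `h`,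
`A^⊗0 ≤ A^⊗1` because of the loop `A h h = 0`, and multiplying by `A` on the left preserves this
inequality, so the column is nondecreasing. A walk with at least `n` steps repeats a node, hence
contains a cycle; cutting the cycle out shortens the walk without decreasing its weight. So every
walk from `i` to `h` weighs at most `(A^⊗(n-1)) i h`, and by monotonicity so does `(A^⊗k) i h`.
-/

open Finset

namespace MaxPlus

variable {n : ℕ} (A : Fin n → Fin n → EReal)

/-- Weight of the walk `f 0, f 1, …, f k`; indexing by `ℕ` rather than `Fin (k + 1)` makes
cutting and splicing walks painless. -/
noncomputable def seqWeight (k : ℕ) (f : ℕ → Fin n) : EReal :=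
  ∑ t ∈ range k, A (f t) (f (t + 1))

def CyclesNonpos : Prop :=
  ∀ (k : ℕ) (f : Fin (k + 1) → Fin n), IsCycle A f → walkWeight A f ≤ 0

@[simp]
lemma seqWeight_zero (f : ℕ → Fin n) : seqWeight A 0 f = 0 := by
  simp [seqWeight]

lemma seqWeight_add (a b : ℕ) (f : ℕ → Fin n) :
    seqWeight A (a + b) f = seqWeight A a f + seqWeight A b (fun t => f (a + t)) := by
  simp only [seqWeight, sum_range_add, add_assoc]

lemma seqWeight_succ (k : ℕ) (f : ℕ → Fin n) :
    seqWeight A (k + 1) f = A (f 0) (f 1) + seqWeight A k (fun t => f (t + 1)) := by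
  rw [add_comm k, seqWeight_add]
  simp [seqWeight, add_comm 1]

lemma seqWeight_congr {k : ℕ} {f g : ℕ → Fin n} (hfg : ∀ t ≤ k, f t = g t) :
    seqWeight A k f = seqWeight A k g :=
  sum_congr rfl fun t ht => by
    rw [hfg t (mem_range.1 ht).le, hfg (t + 1) (mem_range.1 ht)]

lemma walkWeight_eq_seqWeight (k : ℕ) (f : ℕ → Fin n) :
    walkWeight A (fun t : Fin (k + 1) => f t) = seqWeight A k f :=
  Fin.sum_univ_eq_sum_range (fun t => A (f t) (f (t + 1))) k

lemma walkWeight_eq_bot_of_not_isWalk {k : ℕ} {f : Fin (k + 1) → Fin n} (hf : ¬ IsWalk A f) :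
    walkWeight A f = ⊥ := by
  obtain ⟨t, ht⟩ : ∃ t : Fin k, A (f t.castSucc) (f t.succ) = ⊥ := by
    simpa [IsWalk] using hf
  rw [walkWeight, ← add_sum_erase _ _ (mem_univ t), ht, EReal.bot_add]

lemma seqWeight_le_mpPow (k : ℕ) (f : ℕ → Fin n) : seqWeight A k f ≤ mpPow A k (f 0) (f k) := by
  induction k generalizing f with
  | zero => simp [mpPow]
  | succ k ih =>
    rw [seqWeight_succ]
    exact (add_le_add le_rfl (ih _)).trans
      (le_iSup (fun m => A (f 0) m + mpPow A k m (f (k + 1))) (f 1))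

lemma mpPow_eq_bot_or_exists_seqWeight_eq (k : ℕ) (i j : Fin n) :
    mpPow A k i j = ⊥ ∨ ∃ f : ℕ → Fin n, f 0 = i ∧ f k = j ∧ seqWeight A k f = mpPow A k i j := by
  induction k generalizing i with
  | zero =>
    by_cases hij : i = j
    · exact .inr ⟨fun _ => i, rfl, hij, by simp [mpPow, hij]⟩
    · exact .inl (by simp [mpPow, hij])
  | succ k ih =>
    have : Nonempty (Fin n) := ⟨i⟩
    obtain ⟨m, hm⟩ := Finite.exists_max (fun m => A i m + mpPow A k m j)
    have hsup : mpPow A (k + 1) i j = A i m + mpPow A k m j :=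
      le_antisymm (iSup_le hm) (le_iSup (fun m => A i m + mpPow A k m j) m)
    rcases ih m with hbot | ⟨g, hg0, hgk, hg⟩
    · exact .inl (by rw [hsup, hbot, EReal.add_bot])
    · refine .inr ⟨fun t => if t = 0 then i else g (t - 1), rfl, by simpa using hgk, ?_⟩
      rw [seqWeight_succ, hsup, ← hg, ← hg0]
      simp

variable {A} {h : Fin n}

lemma mpPow_apply_le_succ (hloop : A h h = 0) (k : ℕ) (i : Fin n) :
    mpPow A k i h ≤ mpPow A (k + 1) i h := by
  induction k generalizing i with
  | zero =>
    by_cases hih : i = h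
    · subst hih
      simpa [mpPow, mpMul, hloop] using le_iSup (fun m => A i m + mpPow A 0 m i) i
    · simp [mpPow, hih]
  | succ k ih => exact iSup_mono fun m => add_le_add le_rfl (ih m)

lemma monotone_mpPow_apply (hloop : A h h = 0) (i : Fin n) :
    Monotone fun k => mpPow A k i h :=
  monotone_nat_of_le_succ fun k => mpPow_apply_le_succ hloop k i

lemma exists_lt_le_map_eq (f : ℕ → Fin n) : ∃ a b, a < b ∧ b ≤ n ∧ f a = f b := by
  obtain ⟨x, y, hxy, hfxy⟩ :=
    Fintype.exists_ne_map_eq_of_card_lt (fun t : Fin (n + 1) => f t) (by simp)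
  rcases hxy.lt_or_gt with hlt | hlt
  · exact ⟨x, y, hlt, y.is_le, hfxy⟩
  · exact ⟨y, x, hlt, x.is_le, hfxy.symm⟩

/-- Take a repetition `f a = f (a + d)` with `d` minimal. -/
lemma exists_simple_closed_segment (f : ℕ → Fin n) {k : ℕ} (hk : n ≤ k) :
    ∃ a d, 0 < d ∧ a + d ≤ k ∧ f a = f (a + d) ∧
      ∀ s < d, ∀ t < d, f (a + s) = f (a + t) → s = t := by
  classical
  have hrep : ∃ d, 0 < d ∧ ∃ a, a + d ≤ k ∧ f a = f (a + d) := by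
    obtain ⟨a, b, hab, hb, hfab⟩ := exists_lt_le_map_eq f
    exact ⟨b - a, by omega, a, by omega, by rwa [Nat.add_sub_cancel' hab.le]⟩
  obtain ⟨hd, a, hak, hfa⟩ := Nat.find_spec hrep
  have hne : ∀ s t, s < t → t < Nat.find hrep → f (a + s) ≠ f (a + t) := fun s t hst ht heq =>
    Nat.find_min hrep (by omega : t - s < Nat.find hrep)
      ⟨by omega, a + s, by omega, by rw [heq]; congr 1; omega⟩
  refine ⟨a, Nat.find hrep, hd, hak, hfa, fun s hs t ht heq => ?_⟩
  rcases lt_trichotomy s t with hst | hst | hst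
  · exact absurd heq (hne s t hst ht)
  · exact hst
  · exact absurd heq.symm (hne t s hst hs)

/-- A closed segment that is not a walk uses an edge of weight `⊥`, so its weight is `≤ 0` too. -/
lemma seqWeight_nonpos_of_simple_closed (hcyc : CyclesNonpos A) {d : ℕ} (hd : 0 < d)
    (f : ℕ → Fin n) (hclosed : f 0 = f d) (hinj : ∀ s < d, ∀ t < d, f s = f t → s = t) :
    seqWeight A d f ≤ 0 := by
  rw [← walkWeight_eq_seqWeight]
  by_cases hwalk : IsWalk A (fun t : Fin (d + 1) => f t)
  · exact hcyc d _ ⟨hd, hwalk, hclosed, fun s t hst => Fin.ext (hinj s s.isLt t t.isLt hst)⟩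
  · rw [walkWeight_eq_bot_of_not_isWalk A hwalk]
    exact bot_le

lemma exists_shorter_seqWeight_ge (hcyc : CyclesNonpos A) {k : ℕ} (hk : n ≤ k) (f : ℕ → Fin n) :
    ∃ k' < k, ∃ g : ℕ → Fin n, g 0 = f 0 ∧ g k' = f k ∧ seqWeight A k f ≤ seqWeight A k' g := by
  obtain ⟨a, d, hd, hadk, hfa, hinj⟩ := exists_simple_closed_segment f hk
  obtain ⟨r, rfl⟩ := Nat.exists_eq_add_of_le hadk
  set g : ℕ → Fin n := fun t => if t ≤ a then f t else f (t + d) with hg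
  have hg_shift : ∀ t, g (a + t) = f (a + d + t) := by
    rintro (_ | t)
    · simpa [hg] using hfa
    · simp only [hg, if_neg (by omega : ¬ a + (t + 1) ≤ a)]
      congr 1
      omega
  have hcycle : seqWeight A d (fun t => f (a + t)) ≤ 0 :=
    seqWeight_nonpos_of_simple_closed hcyc hd _ (by simpa using hfa) hinj
  have hprefix : seqWeight A a g = seqWeight A a f :=
    seqWeight_congr A fun t ht => by simp [hg, ht]
  refine ⟨a + r, by omega, g, by simp [hg], by rw [hg_shift, add_assoc], ?_⟩
  calc seqWeight A (a + d + r) f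
      = seqWeight A a f + seqWeight A d (fun t => f (a + t))
          + seqWeight A r (fun t => f (a + d + t)) := by
        rw [seqWeight_add, seqWeight_add]
    _ ≤ seqWeight A a f + 0 + seqWeight A r (fun t => f (a + d + t)) :=
        add_le_add (add_le_add le_rfl hcycle) le_rfl
    _ = seqWeight A (a + r) g := by
        rw [add_zero, seqWeight_add, hprefix]
        simp only [hg_shift]

lemma seqWeight_le_mpPow_pred (hloop : A h h = 0) (hcyc : CyclesNonpos A) (k : ℕ)
    (f : ℕ → Fin n) (hfk : f k = h) : seqWeight A k f ≤ mpPow A (n - 1) (f 0) h := by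
  induction k using Nat.strong_induction_on generalizing f with
  | _ k ih =>
  by_cases hk : n ≤ k
  · obtain ⟨k', hk', g, hg0, hgk, hle⟩ := exists_shorter_seqWeight_ge hcyc hk f
    rw [← hg0]
    exact hle.trans (ih k' hk' g (hgk.trans hfk))
  · calc seqWeight A k f ≤ mpPow A k (f 0) h := hfk ▸ seqWeight_le_mpPow A k f
      _ ≤ mpPow A (n - 1) (f 0) h := monotone_mpPow_apply hloop _ (by omega)

end MaxPlus

theorem mpPow_to_loop_monotone_and_stable {n : ℕ} (A : Fin n → Fin n → EReal)
    (h : Fin n) (hloop : A h h = 0)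
    (hcyc : ∀ (k : ℕ) (f : Fin (k + 1) → Fin n), IsCycle A f → walkWeight A f ≤ 0) :
    ∀ i : Fin n,
      (∀ k : ℕ, mpPow A k i h ≤ mpPow A (k + 1) i h) ∧
      (∀ k, n - 1 ≤ k → mpPow A k i h = mpPow A (n - 1) i h) := by
  intro i
  refine ⟨fun k => MaxPlus.mpPow_apply_le_succ hloop k i,
    fun k hk => le_antisymm ?_ (MaxPlus.monotone_mpPow_apply hloop i hk)⟩
  rcases MaxPlus.mpPow_eq_bot_or_exists_seqWeight_eq A k i h with hbot | ⟨f, rfl, hfk, hf⟩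
  · simp [hbot]
  · exact hf ▸ MaxPlus.seqWeight_le_mpPow_pred hloop hcyc k f hfk
end

section
/- Let W be a walk in a digraph on n nodes containing a node h, and let d be a positive integer. Then there exists a walk W' from the start of W to the end of W, obtained from W by removing subcycles, such that (i) W' contains h, (ii) ℓ(W') ≡ ℓ(W) (mod d), and (iii) ℓ(W') ≤ 2d(n-1) + d - 1. -/
/-- `f` lists the successive nodes of a walk of length `k` in the digraph with
edge relation `E`. -/
def IsGWalk {n : ℕ} (E : Fin n → Fin n → Prop) {k : ℕ} (f : Fin (k + 1) → Fin n) : Prop :=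
  ∀ t : Fin k, E (f t.castSucc) (f t.succ)

/-- A cycle: a nonempty closed walk in which only the start and end node coincide. -/
def IsGCycle {n : ℕ} (E : Fin n → Fin n → Prop) {k : ℕ} (f : Fin (k + 1) → Fin n) : Prop :=
  0 < k ∧ IsGWalk E f ∧ f 0 = f (Fin.last k) ∧
    Function.Injective (fun t : Fin k => f t.castSucc)

private lemma walk_reduction_auxN (n d : ℕ) (hd : 0 < d) (E : Fin n → Fin n → Prop)
    (h : Fin n) :
    ∀ k (G : ℕ → Fin n), (∀ i < k, E (G i) (G (i+1))) → (∃ t ≤ k, G t = h) →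
    ∃ (l : ℕ) (G' : ℕ → Fin n), (∀ i < l, E (G' i) (G' (i+1))) ∧ G' 0 = G 0 ∧ G' l = G k ∧
      (∃ t ≤ l, G' t = h) ∧ l % d = k % d ∧ l ≤ 2*d*(n-1)+d-1 := by
  intro k
  induction k using Nat.strong_induction_on with
  | _ k IH =>
    intro G hG hGh
    by_cases hk : k ≤ 2*d*(n-1)+d-1
    · exact ⟨k, G, hG, rfl, rfl, hGh, rfl, hk⟩
    · classical
      have hn : 0 < n := (G 0).pos
      have hk' : 2*d*(n-1)+d ≤ k := by omega
      haveI : NeZero d := ⟨hd.ne'⟩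
      set ψ : Fin (k+1) → ZMod d × ({x : Fin n // x ≠ h} ⊕ Fin n) := fun t =>
        (((t : ℕ) : ZMod d),
          if hs : ∃ s ≤ (t:ℕ), G s = h then Sum.inr (G t)
          else Sum.inl ⟨G t, fun hc => hs ⟨t, le_rfl, hc⟩⟩) with hψdef
      have hcard : Fintype.card (ZMod d × ({x : Fin n // x ≠ h} ⊕ Fin n))
          < Fintype.card (Fin (k+1)) := by
        rw [Fintype.card_prod, Fintype.card_sum, ZMod.card, Fintype.card_fin]
        have h1 : Fintype.card {x : Fin n // x ≠ h} = n - 1 := by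
          simp [Fintype.card_subtype_compl]
        rw [h1, Fintype.card_fin]
        have h2 : d * (n - 1 + n) = 2*d*(n-1) + d := by
          have hn1 : n - 1 + n = 2*(n-1) + 1 := by omega
          rw [hn1]; ring
        omega
      obtain ⟨p, q, hpq, hψpq⟩ := Fintype.exists_ne_map_eq_of_card_lt ψ hcard
      have key : ∀ (p q : Fin (k+1)), ψ p = ψ q →
          G (p:ℕ) = G (q:ℕ) ∧ ((p:ℕ):ZMod d) = ((q:ℕ):ZMod d) ∧
          ((∃ s ≤ (p:ℕ), G s = h) ↔ (∃ s ≤ (q:ℕ), G s = h)) := by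
        intro p q hpq'
        have h1 := congrArg Prod.fst hpq'
        have h2 := congrArg Prod.snd hpq'
        simp only [hψdef] at h1 h2
        by_cases h3 : ∃ s ≤ (p:ℕ), G s = h <;> by_cases h4 : ∃ s ≤ (q:ℕ), G s = h
        · rw [dif_pos h3, dif_pos h4] at h2
          exact ⟨Sum.inr.inj h2, h1, iff_of_true h3 h4⟩
        · rw [dif_pos h3, dif_neg h4] at h2; exact absurd h2 (by simp)
        · rw [dif_neg h3, dif_pos h4] at h2; exact absurd h2 (by simp)
        · rw [dif_neg h3, dif_neg h4] at h2
          exact ⟨congrArg Subtype.val (Sum.inl.inj h2), h1, iff_of_false h3 h4⟩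
      obtain ⟨a, b, hab, hbk, hGab, hcast, hiff⟩ :
          ∃ a b : ℕ, a < b ∧ b ≤ k ∧ G a = G b ∧ ((a:ZMod d) = (b:ZMod d)) ∧
            ((∃ s ≤ a, G s = h) ↔ (∃ s ≤ b, G s = h)) := by
        have hne : (p:ℕ) ≠ (q:ℕ) := fun hh' => hpq (Fin.ext hh')
        rcases hne.lt_or_gt with hlt | hlt
        · obtain ⟨e1, e2, e3⟩ := key p q hψpq
          exact ⟨p, q, hlt, Nat.lt_succ_iff.mp q.isLt, e1, e2, e3⟩
        · obtain ⟨e1, e2, e3⟩ := key q p hψpq.symm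
          exact ⟨q, p, hlt, Nat.lt_succ_iff.mp p.isLt, e1, e2, e3⟩
      have hdvd : d ∣ b - a := (Nat.modEq_iff_dvd' hab.le).mp
        ((ZMod.natCast_eq_natCast_iff a b d).mp hcast)
      set c := b - a with hcdef
      have hc : 0 < c := by omega
      set G' : ℕ → Fin n := fun i => if i ≤ a then G i else G (i + c) with hG'def
      have hwalk' : ∀ i < k - c, E (G' i) (G' (i+1)) := by
        intro i hi
        by_cases h5 : i + 1 ≤ a
        · simp only [hG'def]
          rw [if_pos (by omega : i ≤ a), if_pos h5]
          exact hG i (by omega)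
        · by_cases h6 : i ≤ a
          · have hia : i = a := by omega
            simp only [hG'def]
            rw [if_pos h6, if_neg h5, hia, hGab, show a + 1 + c = b + 1 by omega]
            exact hG b (by omega)
          · simp only [hG'def]
            rw [if_neg h6, if_neg (by omega : ¬ i + 1 ≤ a),
              show i + 1 + c = (i + c) + 1 by omega]
            exact hG (i + c) (by omega)
      have h0' : G' 0 = G 0 := by
        simp only [hG'def]; rw [if_pos (Nat.zero_le a)]
      have hl' : G' (k - c) = G k := by
        simp only [hG'def]
        by_cases h5 : k - c ≤ a
        · have hbk' : b = k := by omega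
          rw [if_pos h5, show k - c = a by omega, hGab, hbk']
        · rw [if_neg h5, show k - c + c = k by omega]
      have hvis' : ∃ t ≤ k - c, G' t = h := by
        by_cases hsa : ∃ s ≤ a, G s = h
        · obtain ⟨s, hs1, hs2⟩ := hsa
          refine ⟨s, by omega, ?_⟩
          simp only [hG'def]; rw [if_pos hs1]; exact hs2
        · have hsb : ¬ ∃ s ≤ b, G s = h := fun hh' => hsa (hiff.mpr hh')
          obtain ⟨t0, ht0, ht0h⟩ := hGh
          have ht0b : b < t0 := by
            by_contra hcon
            exact hsb ⟨t0, by omega, ht0h⟩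
          refine ⟨t0 - c, by omega, ?_⟩
          simp only [hG'def]
          rw [if_neg (by omega), show t0 - c + c = t0 by omega]
          exact ht0h
      have hmod' : (k - c) % d = k % d := by
        obtain ⟨e, he⟩ := hdvd
        have hk2 : k = (k - c) + d * e := by omega
        conv_rhs => rw [hk2]
        rw [Nat.add_mul_mod_self_left]
      obtain ⟨l, G'', w1, w2, w3, w4, w5, w6⟩ := IH (k - c) (by omega) G' hwalk' hvis'
      exact ⟨l, G'', w1, w2.trans h0', w3.trans hl', w4, w5.trans hmod', w6⟩

theorem walk_reduction_red {n : ℕ} (E : Fin n → Fin n → Prop)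
    {lW : ℕ} (f : Fin (lW + 1) → Fin n) (hW : IsGWalk E f)
    (h : Fin n) (hh : ∃ t, f t = h) (d : ℕ) (hd : 0 < d) :
    ∃ (l : ℕ) (f' : Fin (l + 1) → Fin n), IsGWalk E f' ∧
      f' 0 = f 0 ∧ f' (Fin.last l) = f (Fin.last lW) ∧
      (∃ t, f' t = h) ∧
      l % d = lW % d ∧
      l ≤ 2 * d * (n - 1) + d - 1 ∧
      ∀ t : Fin l, ∃ s : Fin lW,
        f' t.castSucc = f s.castSucc ∧ f' t.succ = f s.succ := by
  classical
  set E'' : Fin n → Fin n → Prop :=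
    fun x y => ∃ s : Fin lW, x = f s.castSucc ∧ y = f s.succ with hE''
  set G : ℕ → Fin n := fun i =>
    if hi : i ≤ lW then f ⟨i, by omega⟩ else f (Fin.last lW) with hGdef
  have hGeq : ∀ i (hi : i ≤ lW), G i = f ⟨i, by omega⟩ := by
    intro i hi; simp only [hGdef]; rw [dif_pos hi]
  have hGwalk : ∀ i < lW, E'' (G i) (G (i+1)) := by
    intro i hi
    rw [hGeq i (by omega), hGeq (i+1) (by omega)]
    exact ⟨⟨i, hi⟩, rfl, rfl⟩
  have hGh : ∃ t ≤ lW, G t = h := by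
    obtain ⟨t, ht⟩ := hh
    refine ⟨(t:ℕ), Nat.lt_succ_iff.mp t.isLt, ?_⟩
    rw [hGeq (t:ℕ) (Nat.lt_succ_iff.mp t.isLt), Fin.eta]
    exact ht
  obtain ⟨l, G', w1, w2, w3, w4, w5, w6⟩ :=
    walk_reduction_auxN n d hd E'' h lW G hGwalk hGh
  refine ⟨l, fun s => G' s, ?_, ?_, ?_, ?_, w5, w6, ?_⟩
  · intro t
    obtain ⟨s, e1, e2⟩ := w1 (t:ℕ) t.isLt
    show E (G' ((t.castSucc : Fin (l+1)) : ℕ)) (G' ((t.succ : Fin (l+1)) : ℕ))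
    have c1 : ((t.castSucc : Fin (l+1)) : ℕ) = (t:ℕ) := rfl
    have c2 : ((t.succ : Fin (l+1)) : ℕ) = (t:ℕ) + 1 := rfl
    rw [c1, c2, e1, e2]
    exact hW s
  · show G' ((0 : Fin (l+1)) : ℕ) = f 0
    rw [Fin.val_zero, w2, hGeq 0 (Nat.zero_le _)]
    exact congrArg f (Fin.ext rfl)
  · show G' ((Fin.last l : Fin (l+1)) : ℕ) = f (Fin.last lW)
    rw [Fin.val_last, w3, hGeq lW le_rfl]
    exact congrArg f (Fin.ext rfl)
  · obtain ⟨t0, ht0l, ht0⟩ := w4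
    exact ⟨⟨t0, by omega⟩, ht0⟩
  · intro t
    obtain ⟨s, e1, e2⟩ := w1 (t:ℕ) t.isLt
    exact ⟨s, e1, e2⟩
end

section
/- Let A be an irreducible n×n max-plus matrix with maximum cycle mean λ(A) = 0 and let Γ be a cycle of G(A) of weight 0 (a critical cycle). Suppose k₀ ∈ ℕ and W is a walk from i to j with ℓ(W) ≡ k₀ (mod ℓ(Γ)) that visits a node of Γ and has maximum weight among all such walks of length ≥ n² in the class k₀ mod ℓ(Γ). Then (A^⊗k)_{i,j} ≥ A(W) for every k ≥ n² with k ≡ k₀ (mod ℓ(Γ)). -/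
/-!
Split `W` at a node `v` of `Γ`. Since `Γ` rotated to start at `v` is a closed walk of weight
`0`, `(A^⊗(m ℓ(Γ)))_{vv} ≥ 0`, so walks through `v` can be lengthened by any multiple of `ℓ(Γ)`
without losing weight; this settles `ℓ(W) ≤ k`. If `ℓ(W) > k ≥ n²`, the two halves of `W`
contain at least `ℓ(Γ)` disjoint elementary cycles that can be removed independently without
losing `v` and without decreasing the weight (`λ(A) ≤ 0`); by pigeonhole on prefix sums the
lengths of some of them add up to a positive multiple of `ℓ(Γ)`. Removing those shortens `W`
inside its residue class, and induction on the length concludes. The argument runs on entries of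
`A^⊗ℓ`, which are attained by walks whenever they are not `⊥`.
-/

theorem List.exists_first_duplicate {α : Type*} {l : List α} (h : ¬ l.Nodup) :
    ∃ x u y z, l = x ++ u :: (y ++ u :: z) ∧ (x ++ u :: y).Nodup := by
  induction l using List.reverseRecOn with
  | nil => exact absurd List.nodup_nil h
  | append_singleton l b ih =>
    by_cases hl : l.Nodup
    · have hb : b ∈ l := by
        by_contra hb
        exact h (by simpa using hl.concat hb)
      obtain ⟨x, y, rfl⟩ := List.append_of_mem hb
      exact ⟨x, b, y, [], by simp, hl⟩
    · obtain ⟨x, u, y, z, rfl, hnd⟩ := ih hl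
      exact ⟨x, u, y, z ++ [b], by simp, hnd⟩

theorem List.exists_elementary_loop_of_card_lt {α : Type*} [Fintype α] {c : List α}
    (h : Fintype.card α < c.length) :
    ∃ x u y z, c = x ++ u :: (y ++ u :: z) ∧ (u :: y).Nodup ∧
      x.length + y.length + 1 ≤ Fintype.card α := by
  obtain ⟨x, u, y, z, rfl, hxy⟩ := List.exists_first_duplicate (l := c) fun hnd => by
    have := hnd.length_le_card
    omega
  have hlen := hxy.length_le_card
  simp only [List.length_append, List.length_cons] at hlen
  exact ⟨x, u, y, z, rfl, hxy.sublist (List.sublist_append_right x (u :: y)), by omega⟩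

theorem List.exists_sublist_ne_nil_dvd_sum {p : ℕ} (hp : 0 < p) {ds : List ℕ}
    (hlen : p ≤ ds.length) : ∃ S : List ℕ, S.Sublist ds ∧ S ≠ [] ∧ p ∣ S.sum := by
  obtain ⟨r, r', hne, heq⟩ := Fintype.exists_ne_map_eq_of_card_lt
    (fun r : Fin (p + 1) => (⟨(ds.take r).sum % p, Nat.mod_lt _ hp⟩ : Fin p)) (by simp)
  wlog hlt : r < r' generalizing r r'
  · exact this r' r hne.symm heq.symm (lt_of_le_of_ne (not_lt.1 hlt) hne.symm)
  refine ⟨(ds.take r').drop r, (drop_sublist _ _).trans (take_sublist _ _), ?_, ?_⟩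
  · rw [← length_pos_iff, length_drop, length_take]
    omega
  · have hsplit := sum_take_add_sum_drop (ds.take r') r
    rw [take_take, min_eq_left (show (r : ℕ) ≤ r' by omega)] at hsplit
    have hmod : Nat.ModEq p (ds.take r).sum ((ds.take r).sum + ((ds.take r').drop r).sum) := by
      rw [hsplit]
      exact congrArg Fin.val heq
    simpa using (Nat.modEq_iff_dvd' (Nat.le_add_right _ _)).1 hmod

theorem List.getLast?_ofFn {α : Type*} {k : ℕ} (f : Fin (k + 1) → α) :
    (List.ofFn f).getLast? = some (f (Fin.last k)) := by
  rw [List.ofFn_succ', List.concat_eq_append, List.getLast?_concat]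

section

variable {n : ℕ} {A : Fin n → Fin n → EReal}

def CycleWeightsNonpos (A : Fin n → Fin n → EReal) : Prop :=
  ∀ (k : ℕ) (f : Fin (k + 1) → Fin n), IsCycle A f → walkWeight A f ≤ 0

abbrev IsListWalk (A : Fin n → Fin n → EReal) (l : List (Fin n)) : Prop :=
  l.IsChain (fun a b => A a b ≠ ⊥)

noncomputable def listWeight (A : Fin n → Fin n → EReal) : List (Fin n) → EReal
  | [] => 0
  | [_] => 0
  | a :: b :: t => A a b + listWeight A (b :: t)

@[simp] theorem listWeight_singleton (a : Fin n) : listWeight A [a] = 0 := rfl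

@[simp] theorem listWeight_cons_cons (a b : Fin n) (t : List (Fin n)) :
    listWeight A (a :: b :: t) = A a b + listWeight A (b :: t) := rfl

theorem listWeight_append_cons (x : List (Fin n)) (u : Fin n) (q : List (Fin n)) :
    listWeight A (x ++ u :: q) = listWeight A (x ++ [u]) + listWeight A (u :: q) := by
  induction x using List.twoStepInduction with
  | nil => simp
  | singleton a => simp
  | cons_cons a b x _ ih => simp_all [add_assoc]

theorem listWeight_ofFn {k : ℕ} (f : Fin (k + 1) → Fin n) :
    listWeight A (List.ofFn f) = walkWeight A f := by
  induction k with
  | zero => simp [walkWeight]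
  | succ k ih =>
    rw [List.ofFn_succ, List.ofFn_succ, listWeight_cons_cons,
      ← List.ofFn_succ (f := fun i => f i.succ), ih, walkWeight, walkWeight, Fin.sum_univ_succ]
    rfl

theorem isListWalk_ofFn_iff {k : ℕ} (f : Fin (k + 1) → Fin n) :
    IsListWalk A (List.ofFn f) ↔ IsWalk A f := by
  rw [IsListWalk, List.isChain_ofFn]
  exact ⟨fun h t => h t (by omega), fun h i hi => h ⟨i, by omega⟩⟩

theorem listWeight_cycle_nonpos (hA : CycleWeightsNonpos A) {u : Fin n} {y : List (Fin n)}
    (hnd : (u :: y).Nodup) (hw : IsListWalk A (u :: y ++ [u])) :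
    listWeight A (u :: y ++ [u]) ≤ 0 := by
  set l := u :: y ++ [u] with hl
  have hlen : l.length = y.length + 1 + 1 := by simp [hl]
  let f : Fin (y.length + 1 + 1) → Fin n := fun t => l[(t : ℕ)]'(by omega)
  have hf : List.ofFn f = l :=
    List.ext_getElem (by simp [hlen]) fun i _ _ => by simp only [List.getElem_ofFn, f]
  have hcyc : IsCycle A f := by
    refine ⟨by omega, (isListWalk_ofFn_iff f).1 (hf ▸ hw), by simp [f, hl], ?_⟩
    intro t t' htt'
    have htt'' : (u :: y ++ [u])[(t : ℕ)]'(by simp) = (u :: y ++ [u])[(t' : ℕ)]'(by simp) := htt'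
    rw [List.getElem_append_left (by simp; omega), List.getElem_append_left (by simp; omega)]
      at htt''
    exact Fin.ext (hnd.getElem_inj_iff.1 htt'')
  rw [← hf, listWeight_ofFn]
  exact hA _ f hcyc

@[simp] theorem mpPow_zero_self (v : Fin n) : mpPow A 0 v v = 0 := by simp [mpPow]

theorem mpPow_succ_apply (p : ℕ) (i j : Fin n) :
    mpPow A (p + 1) i j = ⨆ u, A i u + mpPow A p u j := rfl

theorem exists_mpPow_succ_eq (p : ℕ) (i j : Fin n) :
    ∃ u, mpPow A (p + 1) i j = A i u + mpPow A p u j := by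
  have : Nonempty (Fin n) := ⟨i⟩
  obtain ⟨u, hu⟩ := exists_eq_ciSup_of_finite (f := fun u => A i u + mpPow A p u j)
  exact ⟨u, hu.symm⟩

theorem mpPow_add_le (p q : ℕ) (i v j : Fin n) :
    mpPow A p i v + mpPow A q v j ≤ mpPow A (p + q) i j := by
  induction p generalizing i with
  | zero =>
    by_cases hv : i = v
    · subst hv; simp
    · simp [mpPow, hv]
  | succ p ih =>
    obtain ⟨u, hu⟩ := exists_mpPow_succ_eq p i v
    rw [hu, add_assoc, Nat.succ_add, mpPow_succ_apply]
    exact (add_le_add le_rfl (ih u)).trans (le_iSup (fun u => A i u + mpPow A (p + q) u j) u)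

theorem mpPow_mul_nonneg {p : ℕ} {v : Fin n} (hv : 0 ≤ mpPow A p v v) (q : ℕ) :
    0 ≤ mpPow A (p * q) v v := by
  induction q with
  | zero => simp
  | succ q ih => exact (add_nonneg ih hv).trans (mpPow_add_le _ _ _ _ _)

theorem add_le_mpPow_of_nonneg {m : ℕ} {v : Fin n} (hv : 0 ≤ mpPow A m v v) (a b : ℕ)
    (i j : Fin n) : mpPow A a i v + mpPow A b v j ≤ mpPow A (a + m + b) i j :=
  calc mpPow A a i v + mpPow A b v j ≤ mpPow A a i v + mpPow A m v v + mpPow A b v j := by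
        gcongr; exact le_add_of_nonneg_right hv
    _ ≤ mpPow A (a + m) i v + mpPow A b v j := by gcongr; exact mpPow_add_le _ _ _ _ _
    _ ≤ mpPow A (a + m + b) i j := mpPow_add_le _ _ _ _ _

theorem listWeight_le_mpPow {p : ℕ} {c : List (Fin n)} {i j : Fin n} (hc : IsListWalk A c)
    (hlen : c.length = p + 1) (hi : c.head? = some i) (hj : c.getLast? = some j) :
    listWeight A c ≤ mpPow A p i j := by
  induction p generalizing c i with
  | zero =>
    obtain ⟨t, rfl⟩ := List.head?_eq_some_iff.1 hi
    obtain rfl : t = [] := by simpa using hlen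
    obtain rfl : i = j := by simpa using hj
    simp
  | succ p ih =>
    obtain ⟨_ | ⟨u, t⟩, rfl⟩ := List.head?_eq_some_iff.1 hi
    · simp at hlen
    rw [List.getLast?_cons_cons] at hj
    calc listWeight A (i :: u :: t) = A i u + listWeight A (u :: t) := rfl
      _ ≤ A i u + mpPow A p u j := by
        gcongr; exact ih (List.isChain_cons_cons.1 hc).2 (by simpa using hlen) rfl hj
      _ ≤ mpPow A (p + 1) i j := le_iSup (fun u => A i u + mpPow A p u j) u

theorem exists_listWalk_of_mpPow_ne_bot {p : ℕ} {i j : Fin n} (hne : mpPow A p i j ≠ ⊥) :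
    ∃ c, IsListWalk A c ∧ c.length = p + 1 ∧ c.head? = some i ∧ c.getLast? = some j ∧
      mpPow A p i j ≤ listWeight A c := by
  induction p generalizing i with
  | zero =>
    obtain rfl : i = j := by by_contra hij; simp [mpPow, hij] at hne
    exact ⟨[i], by simp, rfl, rfl, rfl, by simp⟩
  | succ p ih =>
    obtain ⟨u, hu⟩ := exists_mpPow_succ_eq p i j
    rw [hu, EReal.add_ne_bot_iff] at hne
    obtain ⟨c, hc, hlen, hi, hj, hw⟩ := ih hne.2
    obtain ⟨t, rfl⟩ := List.head?_eq_some_iff.1 hi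
    refine ⟨i :: u :: t, List.isChain_cons_cons.2 ⟨hne.1, hc⟩, by simpa using hlen, rfl,
      by rwa [List.getLast?_cons_cons], ?_⟩
    rw [hu, listWeight_cons_cons]
    gcongr

theorem listWeight_append_cons_le {x q : List (Fin n)} {u i : Fin n} {B : EReal}
    (hc : IsListWalk A (x ++ u :: q)) (hi : (x ++ u :: q).head? = some i)
    (hq : listWeight A (u :: q) ≤ B) :
    listWeight A (x ++ u :: q) ≤ mpPow A x.length i u + B := by
  rw [listWeight_append_cons]
  gcongr
  exact listWeight_le_mpPow (List.isChain_split.1 hc).1 (by simp)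
    (by simpa [List.head?_append] using hi) (by simp)

/-- The first repeated node of `c` closes an elementary cycle among the first `n + 1` nodes; the
other cycles are found in the rest of the walk, so each can be kept or removed independently. -/
theorem exists_removable_cycle_lengths (hA : CycleWeightsNonpos A) (m : ℕ)
    {c : List (Fin n)} {i j : Fin n} (hc : IsListWalk A c) (hi : c.head? = some i)
    (hj : c.getLast? = some j) (hlen : m * n < c.length) :
    ∃ ds : List ℕ, ds.length = m ∧ (∀ d ∈ ds, 0 < d) ∧
      ∀ S : List ℕ, S.Sublist ds → ∃ ℓ, ℓ + S.sum + 1 = c.length ∧ listWeight A c ≤ mpPow A ℓ i j := by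
  induction m generalizing c i with
  | zero =>
    refine ⟨[], rfl, by simp, fun S hS => ?_⟩
    obtain rfl := List.sublist_nil.1 hS
    have hc' : c.length = c.length - 1 + 1 := by omega
    exact ⟨c.length - 1, by simp; omega, listWeight_le_mpPow hc hc' hi hj⟩
  | succ m ih =>
    rw [Nat.succ_mul] at hlen
    obtain ⟨x, u, y, z, rfl, hnd, hxy_len⟩ :=
      List.exists_elementary_loop_of_card_lt (c := c) (by simp only [Fintype.card_fin]; omega)
    simp only [Fintype.card_fin] at hxy_len
    have hloop : IsListWalk A (u :: y ++ [u]) ∧ IsListWalk A (u :: z) :=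
      List.isChain_split.1 (List.isChain_split.1 hc).2
    obtain ⟨ds, hds, hpos, hS⟩ := ih hloop.2 rfl
      (by rwa [List.getLast?_append_cons, ← List.cons_append, List.getLast?_append_cons] at hj)
      (by simp at hlen ⊢; omega)
    refine ⟨(y.length + 1) :: ds, by simp [hds], by simpa using hpos, fun S hS' => ?_⟩
    rcases List.sublist_cons_iff.1 hS' with hSds | ⟨S, rfl, hSds⟩
    · obtain ⟨ℓ, hℓ, hw⟩ := hS S hSds
      refine ⟨(x ++ u :: y).length + ℓ, by simp at hℓ ⊢; omega, ?_⟩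
      have hc' : IsListWalk A ((x ++ u :: y) ++ u :: z) := by simpa using hc
      calc listWeight A (x ++ u :: (y ++ u :: z))
          = listWeight A ((x ++ u :: y) ++ u :: z) := by simp
        _ ≤ mpPow A (x ++ u :: y).length i u + mpPow A ℓ u j :=
          listWeight_append_cons_le hc' (by simpa using hi) hw
        _ ≤ _ := mpPow_add_le _ _ _ _ _
    · obtain ⟨ℓ, hℓ, hw⟩ := hS S hSds
      refine ⟨x.length + ℓ, by simp at hℓ ⊢; omega, ?_⟩
      have hloop_nonpos := listWeight_cycle_nonpos hA hnd hloop.1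
      calc listWeight A (x ++ u :: (y ++ u :: z)) ≤ mpPow A x.length i u + mpPow A ℓ u j := by
            refine listWeight_append_cons_le hc hi ?_
            rw [← List.cons_append, listWeight_append_cons]
            simpa using add_le_add hloop_nonpos hw
        _ ≤ mpPow A (x.length + ℓ) i j := mpPow_add_le _ _ _ _ _

theorem exists_shorter_of_ne_bot (hA : CycleWeightsNonpos A) {p a b : ℕ} (hp : 0 < p)
    (hroom : p ≤ a / n + b / n) {i v j : Fin n}
    (h₁ : mpPow A a i v ≠ ⊥) (h₂ : mpPow A b v j ≠ ⊥) :
    ∃ a' b' d, 0 < d ∧ p ∣ d ∧ a' + b' + d = a + b ∧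
      mpPow A a i v + mpPow A b v j ≤ mpPow A a' i v + mpPow A b' v j := by
  obtain ⟨c₁, hc₁, hlen₁, hi₁, hj₁, hw₁⟩ := exists_listWalk_of_mpPow_ne_bot h₁
  obtain ⟨c₂, hc₂, hlen₂, hi₂, hj₂, hw₂⟩ := exists_listWalk_of_mpPow_ne_bot h₂
  obtain ⟨ds₁, hds₁, hpos₁, hred₁⟩ := exists_removable_cycle_lengths hA (a / n) hc₁ hi₁ hj₁
    (by rw [hlen₁]; exact Nat.lt_succ_of_le (Nat.div_mul_le_self a n))
  obtain ⟨ds₂, hds₂, hpos₂, hred₂⟩ := exists_removable_cycle_lengths hA (b / n) hc₂ hi₂ hj₂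
    (by rw [hlen₂]; exact Nat.lt_succ_of_le (Nat.div_mul_le_self b n))
  obtain ⟨S, hS, hSne, hpS⟩ :=
    List.exists_sublist_ne_nil_dvd_sum hp (ds := ds₁ ++ ds₂) (by simp [hds₁, hds₂]; omega)
  have hSpos : 0 < S.sum := List.sum_pos _ (fun d hd => by
    rcases List.mem_append.1 (hS.subset hd) with hd | hd
    exacts [hpos₁ d hd, hpos₂ d hd]) hSne
  obtain ⟨S₁, S₂, rfl, hS₁, hS₂⟩ := List.sublist_append_iff.1 hS
  obtain ⟨ℓ₁, hℓ₁, hw₁'⟩ := hred₁ S₁ hS₁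
  obtain ⟨ℓ₂, hℓ₂, hw₂'⟩ := hred₂ S₂ hS₂
  refine ⟨ℓ₁, ℓ₂, (S₁ ++ S₂).sum, hSpos, hpS, by simp only [List.sum_append]; omega,
    add_le_add (hw₁.trans hw₁') (hw₂.trans hw₂')⟩

theorem exists_split_with_room {C : Set (Fin n)} {p a b : ℕ} (hpn : p ≤ n)
    (hall : p = n → ∀ v, v ∈ C) (hlong : n ^ 2 < a + b) {i v j : Fin n} (hv : v ∈ C) :
    ∃ a₀ b₀ v₀, v₀ ∈ C ∧ a₀ + b₀ = a + b ∧ p ≤ a₀ / n + b₀ / n ∧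
      mpPow A a i v + mpPow A b v j ≤ mpPow A a₀ i v₀ + mpPow A b₀ v₀ j := by
  have hn : 0 < n := i.pos
  have hnL : n ≤ (a + b) / n := (Nat.le_div_iff_mul_le hn).2 (by rw [sq] at hlong; omega)
  rcases hpn.lt_or_eq with hlt | rfl
  · refine ⟨a, b, v, hv, rfl, ?_, le_rfl⟩
    have := Nat.add_div (a := a) (b := b) hn
    split_ifs at this <;> omega
  -- `a / n + b / n` may be only `n - 1`; but now every node is critical, so split at `i`.
  · refine ⟨0, a + b, i, hall rfl i, zero_add _, by simpa using hnL, ?_⟩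
    rw [mpPow_zero_self, zero_add]
    exact mpPow_add_le _ _ _ _ _

theorem mpPow_add_le_of_critical (hA : CycleWeightsNonpos A) {C : Set (Fin n)} {p : ℕ}
    (hp : 0 < p) (hpn : p ≤ n) (hC : ∀ v ∈ C, 0 ≤ mpPow A p v v) (hall : p = n → ∀ v, v ∈ C)
    {k : ℕ} (hk : n ^ 2 ≤ k) (i j : Fin n) {a b : ℕ} {v : Fin n} (hv : v ∈ C)
    (hmod : (a + b) % p = k % p) :
    mpPow A a i v + mpPow A b v j ≤ mpPow A k i j := by
  induction hL : a + b using Nat.strong_induction_on generalizing a b v with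
  | _ L ih =>
  subst hL
  by_cases hLk : a + b ≤ k
  · obtain ⟨q, hq⟩ := (Nat.modEq_iff_dvd' hLk).1 hmod
    have := add_le_mpPow_of_nonneg (mpPow_mul_nonneg (hC v hv) q) a b i j
    rwa [show a + p * q + b = k by omega] at this
  obtain ⟨a₀, b₀, v₀, hv₀, hab₀, hroom, hle⟩ :=
    exists_split_with_room (a := a) (b := b) (i := i) (j := j) hpn hall (by omega) hv
  refine hle.trans ?_
  rcases eq_or_ne (mpPow A a₀ i v₀) ⊥ with h₁ | h₁
  · simp [h₁]
  rcases eq_or_ne (mpPow A b₀ v₀ j) ⊥ with h₂ | h₂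
  · simp [h₂]
  obtain ⟨a', b', d, hd, ⟨q, rfl⟩, hsum, hle'⟩ := exists_shorter_of_ne_bot hA hp hroom h₁ h₂
  refine hle'.trans (ih (a' + b') (by omega) hv₀ ?_ rfl)
  rw [← hmod, ← hab₀, ← hsum, Nat.add_mul_mod_self_left]

theorem IsWalk.walkWeight_le_mpPow_add {k : ℕ} {f : Fin (k + 1) → Fin n} (hf : IsWalk A f)
    (t : Fin (k + 1)) : ∃ a b, a + b = k ∧
      walkWeight A f ≤ mpPow A a (f 0) (f t) + mpPow A b (f t) (f (Fin.last k)) := by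
  obtain ⟨x, y, hxy⟩ := List.append_of_mem (List.mem_ofFn.2 ⟨t, rfl⟩ : f t ∈ List.ofFn f)
  have hc : IsListWalk A (x ++ f t :: y) := hxy ▸ (isListWalk_ofFn_iff f).2 hf
  have hlen := congrArg List.length hxy
  simp only [List.length_ofFn, List.length_append, List.length_cons] at hlen
  refine ⟨x.length, y.length, by omega, ?_⟩
  rw [← listWeight_ofFn, hxy]
  refine listWeight_append_cons_le hc (by rw [← hxy]; simp)
    (listWeight_le_mpPow (List.isChain_split.1 hc).2 rfl rfl ?_)
  rw [← List.getLast?_append_cons x, ← hxy, List.getLast?_ofFn]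

theorem IsCycle.length_le {k : ℕ} {g : Fin (k + 1) → Fin n} (hg : IsCycle A g) : k ≤ n := by
  simpa using Fintype.card_le_of_injective _ hg.2.2.2

theorem IsCycle.mem_range_of_length_eq {k : ℕ} {g : Fin (k + 1) → Fin n} (hg : IsCycle A g)
    (hk : k = n) (v : Fin n) : v ∈ Set.range g := by
  subst hk
  obtain ⟨t, ht⟩ := Finite.injective_iff_surjective.1 hg.2.2.2 v
  exact ⟨t.castSucc, ht⟩

theorem IsCycle.mpPow_self_nonneg {k : ℕ} {g : Fin (k + 1) → Fin n} (hg : IsCycle A g)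
    (hg0 : walkWeight A g = 0) (s : Fin (k + 1)) : 0 ≤ mpPow A k (g s) (g s) := by
  obtain ⟨a, b, hab, hw⟩ := hg.2.1.walkWeight_le_mpPow_add s
  rw [hg0, ← hg.2.2.1, add_comm] at hw
  rw [← hab, add_comm a b]
  exact hw.trans (mpPow_add_le _ _ _ _ _)

end

theorem pumping_critical_walks_general {n : ℕ} (A : Fin n → Fin n → EReal)
    (hLambdaLe : ∀ (k : ℕ) (f : Fin (k + 1) → Fin n), IsCycle A f → walkWeight A f ≤ 0)
    {lΓ : ℕ} (g : Fin (lΓ + 1) → Fin n) (hΓ : IsCycle A g)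
    (hΓ0 : walkWeight A g = 0)
    (k₀ : ℕ) (i j : Fin n)
    {lW : ℕ} (f : Fin (lW + 1) → Fin n)
    (hW : IsWalk A f) (hWi : f 0 = i) (hWj : f (Fin.last lW) = j)
    (hWcong : lW % lΓ = k₀ % lΓ)
    (hvisit : ∃ (t : Fin (lW + 1)) (s : Fin (lΓ + 1)), f t = g s) :
    ∀ k, n ^ 2 ≤ k → k % lΓ = k₀ % lΓ → walkWeight A f ≤ mpPow A k i j := by
  intro k hk hkmod
  obtain ⟨t, s, hts⟩ := hvisit
  obtain ⟨a, b, hab, hw⟩ := hW.walkWeight_le_mpPow_add t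
  rw [hWi, hWj] at hw
  have hcrit : ∀ v ∈ Set.range g, 0 ≤ mpPow A lΓ v v := by
    rintro _ ⟨s', rfl⟩
    exact hΓ.mpPow_self_nonneg hΓ0 s'
  exact hw.trans (mpPow_add_le_of_critical hLambdaLe hΓ.1 hΓ.length_le hcrit
    hΓ.mem_range_of_length_eq hk i j ⟨s, hts.symm⟩ (by rw [hab, hWcong, hkmod]))

theorem pumping_critical_walks {n : ℕ} (A : Fin n → Fin n → EReal)
    (hirr : ∀ i j : Fin n, ∃ (k : ℕ) (f : Fin (k + 1) → Fin n),
      IsWalk A f ∧ f 0 = i ∧ f (Fin.last k) = j)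
    (hLambdaLe : ∀ (k : ℕ) (f : Fin (k + 1) → Fin n), IsCycle A f → walkWeight A f ≤ 0)
    {lΓ : ℕ} (g : Fin (lΓ + 1) → Fin n) (hΓ : IsCycle A g)
    (hΓ0 : walkWeight A g = 0)
    (k₀ : ℕ) (i j : Fin n)
    {lW : ℕ} (f : Fin (lW + 1) → Fin n)
    (hW : IsWalk A f) (hWi : f 0 = i) (hWj : f (Fin.last lW) = j)
    (hWcong : lW % lΓ = k₀ % lΓ) (hWlen : n ^ 2 ≤ lW)
    (hvisit : ∃ (t : Fin (lW + 1)) (s : Fin (lΓ + 1)), f t = g s)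
    (hmax : ∀ (l : ℕ) (f' : Fin (l + 1) → Fin n), IsWalk A f' →
      f' 0 = i → f' (Fin.last l) = j → l % lΓ = k₀ % lΓ → n ^ 2 ≤ l →
      (∃ (t : Fin (l + 1)) (s : Fin (lΓ + 1)), f' t = g s) →
      walkWeight A f' ≤ walkWeight A f) :
    ∀ k, n ^ 2 ≤ k → k % lΓ = k₀ % lΓ → walkWeight A f ≤ mpPow A k i j :=
  pumping_critical_walks_general A hLambdaLe g hΓ hΓ0 k₀ i j f hW hWi hWj hWcong hvisit
end
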